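/- arXiv:2508.03634 — 6 statements merged into one kernel-verified Lean document; each statement's English description precedes it below -/
import Mathlib

section
/- Let T be an n-vertex tournament that is not strongly connected, with minimum semidegree at least (1/4 − δ²)n for some δ ∈ (0, 1/2). Then T contains at least (1/2 − 2δ)n vertices whose in-degree is smaller than (1/4 + 2δ)n. -/
open Finset

def IsTournament {V : Type*} (T : V → V → Prop) : Prop :=
  (∀ v, ¬ T v v) ∧ ∀ u v : V, u ≠ v → (T u v ↔ ¬ T v u)

def inDeg {V : Type*} [Fintype V] (T : V → V → Prop) [DecidableRel T] (v : V) : ℕ :=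
  (Finset.univ.filter (fun u => T u v)).card

def outDeg {V : Type*} [Fintype V] (T : V → V → Prop) [DecidableRel T] (v : V) : ℕ :=
  (Finset.univ.filter (fun u => T v u)).card

instance {V : Type*} (T : V → V → Prop) [DecidableRel T] :
    DecidablePred (fun p : V × V => T p.1 p.2) :=
  fun p => inferInstanceAs (Decidable (T p.1 p.2))

def eCount {V : Type*} (T : V → V → Prop) [DecidableRel T] (A B : Finset V) : ℕ :=
  ((A ×ˢ B).filter (fun p => T p.1 p.2)).card

def minSemidegree {V : Type*} [Fintype V] (T : V → V → Prop) [DecidableRel T] : ℕ :=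
  if h : (Finset.univ : Finset V).Nonempty then
    Finset.univ.inf' h (fun v => min (inDeg T v) (outDeg T v))
  else 0

/-!
If `T` is not strongly connected, some nonempty set `A` with nonempty complement is entered by
no edge. The in-degrees on `A` are then in-degrees of the subtournament on `A`, so they sum to
`#A (#A - 1) / 2`; as each is at least `(1/4 - δ²) n`, this forces `#A ≥ (1/2 - 2δ²) n + 1`, and
the same argument for out-degrees on the complement gives `#A ≤ (1/2 + 2δ²) n - 1`. So the
in-degrees on `A` exceed the minimum by less than `2δ² n` on average, and by Markov's inequality
at most a fraction `2δ / (2 + δ)` of `A` can have in-degree `≥ (1/4 + 2δ) n`.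
-/

theorem card_filter_le_nsmul_le_sum_sub {ι R : Type*} [AddCommGroup R] [LinearOrder R]
    [IsOrderedAddMonoid R] (A : Finset ι) (f : ι → R) {c d : R} (hf : ∀ i ∈ A, d ≤ f i) :
    #{i ∈ A | c ≤ f i} • (c - d) ≤ ∑ i ∈ A, (f i - d) :=
  calc #{i ∈ A | c ≤ f i} • (c - d)
      ≤ ∑ i ∈ A with c ≤ f i, (f i - d) :=
        card_nsmul_le_sum _ _ _ fun _ hi => sub_le_sub_right (mem_filter.mp hi).2 d
    _ ≤ ∑ i ∈ A, (f i - d) :=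
        sum_le_sum_of_subset_of_nonneg (filter_subset _ _) fun i hi _ => sub_nonneg.mpr (hf i hi)

section Tournament

variable {V : Type*} {T : V → V → Prop}

theorem IsTournament.swap (hT : IsTournament T) : IsTournament (Function.swap T) :=
  ⟨hT.1, fun u v huv => hT.2 v u huv.symm⟩

theorem IsTournament.ite_add_ite_add_ite (hT : IsTournament T) [DecidableRel T] [DecidableEq V]
    (u v : V) :
    ((if T u v then 1 else 0) + (if T v u then 1 else 0) + if u = v then 1 else 0 : ℕ) = 1 := by
  by_cases huv : u = v
  · subst huv; simp [hT.1 u]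
  · have := hT.2 u v huv
    by_cases h : T u v <;> simp_all

theorem eCount_eq_sum_sum [DecidableRel T] (A B : Finset V) :
    eCount T A B = ∑ u ∈ A, ∑ v ∈ B, if T u v then 1 else 0 := by
  rw [eCount, card_filter, sum_product]

theorem IsTournament.two_mul_eCount_self_add_card (hT : IsTournament T) [DecidableRel T]
    (A : Finset V) : 2 * eCount T A A + #A = #A * #A := by
  classical
  have hdiag : ∑ u ∈ A, ∑ v ∈ A, (if u = v then 1 else 0 : ℕ) = #A := by
    simp [sum_ite_eq]
  calc 2 * eCount T A A + #A
      = ∑ u ∈ A, ∑ v ∈ A, ((if T u v then 1 else 0) + (if T v u then 1 else 0)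
          + if u = v then 1 else 0) := by
        rw [← hdiag, two_mul, eCount_eq_sum_sum]
        nth_rewrite 2 [sum_comm]
        simp only [sum_add_distrib]
    _ = #A * #A := by simp [hT.ite_add_ite_add_ite]

def IsInClosed (T : V → V → Prop) (A : Finset V) : Prop :=
  ∀ a ∈ A, ∀ w, T w a → w ∈ A

theorem IsInClosed.compl [Fintype V] [DecidableEq V] {A : Finset V} (hA : IsInClosed T A) :
    IsInClosed (Function.swap T) Aᶜ := by
  intro b hb w hbw
  simp only [mem_compl] at hb ⊢
  exact fun hw => hb (hA w hw b hbw)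

theorem IsInClosed.sum_inDeg [Fintype V] [DecidableRel T] {A : Finset V}
    (hA : IsInClosed T A) : ∑ a ∈ A, inDeg T a = eCount T A A := by
  rw [eCount_eq_sum_sum, sum_comm]
  refine sum_congr rfl fun a ha => ?_
  rw [← card_filter, inDeg]
  congr 1
  ext w
  simpa using hA a ha w

theorem exists_isInClosed_of_not_reachable [Fintype V] [DecidableEq V]
    (h : ¬ ∀ u v : V, Relation.ReflTransGen T u v) :
    ∃ A : Finset V, A.Nonempty ∧ Aᶜ.Nonempty ∧ IsInClosed T A := by
  classical
  simp only [not_forall] at h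
  obtain ⟨u, v, huv⟩ := h
  refine ⟨univ.filter fun w => ¬ Relation.ReflTransGen T u w, ⟨v, by simpa⟩,
    ⟨u, by simpa using Relation.ReflTransGen.refl⟩, ?_⟩
  intro a ha w hwa
  simp only [mem_filter, mem_univ, true_and] at ha ⊢
  exact fun huw => ha (huw.tail hwa)

theorem IsInClosed.two_mul_sum_inDeg_add_card [Fintype V] [DecidableRel T]
    (hT : IsTournament T) {A : Finset V} (hA : IsInClosed T A) :
    2 * ∑ a ∈ A, inDeg T a + #A = #A * #A :=
  hA.sum_inDeg ▸ hT.two_mul_eCount_self_add_card A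

theorem IsInClosed.two_mul_add_one_le_card [Fintype V] [DecidableRel T] (hT : IsTournament T)
    {A : Finset V} (hA : IsInClosed T A) (hne : A.Nonempty) {d : ℝ}
    (hd : ∀ a ∈ A, d ≤ inDeg T a) : 2 * d + 1 ≤ #A := by
  have hcount : (2 * ∑ a ∈ A, (inDeg T a : ℝ) + #A : ℝ) = #A * #A := by
    exact_mod_cast hA.two_mul_sum_inDeg_add_card hT
  have hsum : (#A : ℝ) * d ≤ ∑ a ∈ A, (inDeg T a : ℝ) := by
    simpa using card_nsmul_le_sum A _ d hd
  have hpos : (0 : ℝ) < #A := by exact_mod_cast hne.card_pos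
  nlinarith

theorem IsInClosed.card_sub_card_filter_lt_mul_le [Fintype V] [DecidableRel T]
    (hT : IsTournament T) {A : Finset V} (hA : IsInClosed T A) {c d : ℝ}
    (hd : ∀ a ∈ A, d ≤ inDeg T a) :
    (#A - #{a ∈ A | (inDeg T a : ℝ) < c}) * (c - d) ≤ #A * (#A - 1) / 2 - #A * d := by
  have hcount : (2 * ∑ a ∈ A, (inDeg T a : ℝ) + #A : ℝ) = #A * #A := by
    exact_mod_cast hA.two_mul_sum_inDeg_add_card hT
  have hsplit := card_filter_add_card_filter_not (s := A) (p := fun a => c ≤ (inDeg T a : ℝ))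
  simp only [not_le] at hsplit
  have hhigh := card_filter_le_nsmul_le_sum_sub A (fun a => (inDeg T a : ℝ)) (c := c) hd
  rw [sum_sub_distrib, sum_const, nsmul_eq_mul, nsmul_eq_mul] at hhigh
  have hhigh_card :
      (#A : ℝ) - #{a ∈ A | (inDeg T a : ℝ) < c} = #{a ∈ A | c ≤ (inDeg T a : ℝ)} := by
    rw [← hsplit, Nat.cast_add, add_sub_cancel_right]
  rw [hhigh_card]
  linarith

end Tournament

theorem le_card_low_of_cut_sizes {δ n a s : ℝ} (hδ0 : 0 < δ) (hδ1 : δ < 1/2)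
    (ha : 2 * ((1/4 - δ^2) * n) + 1 ≤ a) (hb : 2 * ((1/4 - δ^2) * n) + 1 ≤ n - a)
    (hs : (a - s) * ((1/4 + 2*δ) * n - (1/4 - δ^2) * n)
      ≤ a * (a - 1) / 2 - a * ((1/4 - δ^2) * n)) :
    (1/2 - 2*δ) * n ≤ s := by
  have hd : 0 < 1/4 - δ^2 := by nlinarith
  have hn : 0 < n := by nlinarith
  have ha0 : 0 ≤ a := by nlinarith [mul_pos hd hn]
  -- `hb` bounds the average excess `(a - 1) / 2 - (1/4 - δ²) n` by `2δ² n`.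
  have hexcess : (a - s) * ((2*δ + δ^2) * n) ≤ 2 * δ^2 * a * n := by nlinarith
  have hratio : a * (2 - δ) ≤ s * (2 + δ) := by
    have : 0 < δ * n := by positivity
    nlinarith
  have hscaled : (1/2 - 2*δ) * n * (2 + δ) ≤ a * (2 - δ) := by
    nlinarith [mul_pos hδ0 hn, mul_pos (mul_pos hδ0 hδ0) hn]
  exact le_of_mul_le_mul_right (hscaled.trans hratio) (by linarith)

theorem stmt_1 {V : Type*} [Fintype V] (n : ℕ) (hn : Fintype.card V = n)
    (T : V → V → Prop) [DecidableRel T] (hT : IsTournament T)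
    (δ : ℝ) (hδ0 : 0 < δ) (hδ1 : δ < 1/2)
    (hdeg : ∀ v : V, (1/4 - δ^2) * n ≤ (inDeg T v : ℝ) ∧ (1/4 - δ^2) * n ≤ (outDeg T v : ℝ))
    (hnsc : ¬ ∀ u v : V, Relation.ReflTransGen T u v) :
    (1/2 - 2*δ) * n ≤
      ((Finset.univ.filter (fun v : V => (inDeg T v : ℝ) < (1/4 + 2*δ) * n)).card : ℝ) := by
  classical
  obtain ⟨A, hAne, hBne, hA⟩ := exists_isInClosed_of_not_reachable hnsc
  have hcardA := hA.two_mul_add_one_le_card hT hAne fun a _ => (hdeg a).1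
  -- `inDeg (Function.swap T)` is `outDeg T` by definition.
  have hcardB := hA.compl.two_mul_add_one_le_card hT.swap hBne fun b _ => (hdeg b).2
  rw [card_compl, hn, Nat.cast_sub (hn ▸ card_le_univ A)] at hcardB
  have hlow : #{a ∈ A | (inDeg T a : ℝ) < (1/4 + 2*δ) * n}
      ≤ #{v | (inDeg T v : ℝ) < (1/4 + 2*δ) * n} :=
    card_le_card (filter_subset_filter _ (subset_univ A))
  exact (le_card_low_of_cut_sizes hδ0 hδ1 hcardA hcardB
    (hA.card_sub_card_filter_lt_mul_le hT fun a _ => (hdeg a).1)).trans (Nat.cast_le.mpr hlow)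
end

section
/- Let T be an n-vertex tournament with balanced bipartition V(T) = A₀ ∪ B₀, |A₀| = n/2, such that the set A₀⁻ = {v ∈ A₀ : |N⁻(v) ∩ A₀| ≤ (1/4 − δ)n} has size at most δn/4, where δ > 0 and δ⁰(T) ≥ ⌊(n+2)/4⌋. Then the set A₀⁺ = {v ∈ A₀ : |N⁺(v) ∩ A₀| ≤ n/5} has size at most 15δn. -/
/-!
Count the arcs inside `A₀`: their number is `C(|A₀|, 2) = n²/8 - n/4`, while a vertex of
`A₀` has out-degree in `A₀` at most `n/2` if it lies in `A₀⁻`, at most `n/5` if it lies in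
`A₀⁺ \ A₀⁻`, and at most `(1/4 + δ)n` otherwise, since its in- and out-degree in `A₀` add up to
`|A₀| - 1`. Each vertex of `A₀⁺ \ A₀⁻` thus loses `(1/20 + δ)n` against the generic bound
`(1/4 + δ)n · |A₀| = n²/8 + δn²/2`, and the only compensation comes from the few vertices of `A₀⁻`
and the slack `δn²/2 + n/4`; hence `|A₀⁺ \ A₀⁻| ≤ 55δn/4`.
-/

open Finset

theorem Finset.sum_le_mul_card_sub_of_le_on_subset {ι R : Type*} [CommRing R] [LinearOrder R]
    [IsOrderedRing R] {s t : Finset ι} (hts : t ⊆ s) {f : ι → R} {c d : R}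
    (hc : ∀ i ∈ s, f i ≤ c) (hd : ∀ i ∈ t, f i ≤ d) :
    ∑ i ∈ s, f i ≤ c * #s - (c - d) * #t := by
  classical
  have hcard : ((#(s \ t) : ℕ) : R) + #t = #s := by
    rw [← Nat.cast_add, card_sdiff_add_card_eq_card hts]
  have hst : ∑ i ∈ s \ t, f i ≤ #(s \ t) • c :=
    sum_le_card_nsmul _ _ _ fun i hi => hc i (mem_sdiff.mp hi).1
  have ht : ∑ i ∈ t, f i ≤ #t • d := sum_le_card_nsmul _ _ _ hd
  rw [nsmul_eq_mul] at hst ht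
  rw [← sum_sdiff hts]
  linear_combination hst + ht + c * hcard

namespace IsTournament

variable {V : Type*} {T : V → V → Prop} [DecidableRel T]

theorem card_out_add_card_in [DecidableEq V] (hT : IsTournament T) {A : Finset V} {v : V}
    (hv : v ∈ A) : #(A.filter (T v ·)) + #(A.filter (T · v)) + 1 = #A := by
  have hout : A.filter (T v ·) = (A.erase v).filter (T v ·) := by
    ext u
    simp only [mem_filter, mem_erase]
    exact ⟨fun ⟨hu, h⟩ => ⟨⟨fun he => hT.1 v (he ▸ h), hu⟩, h⟩, fun ⟨⟨_, hu⟩, h⟩ => ⟨hu, h⟩⟩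
  have hin : A.filter (T · v) = (A.erase v).filter (fun u => ¬ T v u) := by
    ext u
    simp only [mem_filter, mem_erase]
    refine ⟨fun ⟨hu, h⟩ => ⟨⟨fun he => hT.1 v (he ▸ h), hu⟩, (hT.2 u v ?_).mp h⟩,
      fun ⟨⟨hne, hu⟩, h⟩ => ⟨hu, (hT.2 u v hne).mpr h⟩⟩
    rintro rfl
    exact hT.1 u h
  rw [hout, hin, card_filter_add_card_filter_not, card_erase_add_one hv]

theorem card_out_le_of_lt_card_in [DecidableEq V] (hT : IsTournament T) {A : Finset V} {v : V}
    (hv : v ∈ A) {x : ℝ} (h : x < #(A.filter (T · v))) :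
    (#(A.filter (T v ·)) : ℝ) ≤ #A - 1 - x := by
  have hsum : (#(A.filter (T v ·)) : ℝ) + #(A.filter (T · v)) + 1 = #A := by
    exact_mod_cast hT.card_out_add_card_in hv
  linarith

theorem sum_card_out (hT : IsTournament T) (A : Finset V) :
    ∑ v ∈ A, #(A.filter (T v ·)) = (#A).choose 2 := by
  classical
  have hswap : ∑ v ∈ A, #(A.filter (T · v)) = ∑ v ∈ A, #(A.filter (T v ·)) := by
    simp only [card_filter]
    exact sum_comm
  have htotal : ∑ v ∈ A, (#(A.filter (T v ·)) + #(A.filter (T · v)) + 1) = #A * #A := by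
    rw [sum_congr rfl fun v hv => hT.card_out_add_card_in hv, sum_const, smul_eq_mul]
  rw [sum_add_distrib, sum_add_distrib, hswap, sum_const, smul_eq_mul, mul_one] at htotal
  rw [Nat.choose_two_right, Nat.mul_sub_one]
  omega

end IsTournament

theorem stmt_6 : ∀ δ : ℝ, 0 < δ → ∃ n₀ : ℕ, ∀ n : ℕ, n₀ ≤ n → Even n →
    ∀ (V : Type) [Fintype V] [DecidableEq V] (T : V → V → Prop) [DecidableRel T],
      IsTournament T → Fintype.card V = n →
      ∀ A₀ B₀ : Finset V, Disjoint A₀ B₀ → A₀ ∪ B₀ = Finset.univ → A₀.card = n/2 →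
      (∀ v : V, (n + 2)/4 ≤ inDeg T v ∧ (n + 2)/4 ≤ outDeg T v) →
      (((A₀.filter (fun v => ((A₀.filter (fun u => T u v)).card : ℝ) ≤ (1/4 - δ) * n)).card : ℝ)
          ≤ δ * n / 4) →
      ((A₀.filter (fun v => ((A₀.filter (fun u => T v u)).card : ℝ) ≤ (n : ℝ)/5)).card : ℝ)
          ≤ 15 * δ * n := by
  intro δ hδ
  refine ⟨⌈2 / δ⌉₊, fun n hn hne V _ _ T _ hT _ A₀ _ _ _ hA _ hP => ?_⟩
  set P := A₀.filter (fun v => ((A₀.filter (fun u => T u v)).card : ℝ) ≤ (1/4 - δ) * n)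
  set S := A₀.filter (fun v => ((A₀.filter (fun u => T v u)).card : ℝ) ≤ (n : ℝ)/5)
  have hδn : 2 ≤ δ * n := by
    rw [← div_le_iff₀' hδ]
    exact (Nat.le_ceil _).trans (Nat.cast_le.mpr hn)
  have ha : (#A₀ : ℝ) = n / 2 := by
    rw [hA, Nat.cast_div_charZero (even_iff_two_dvd.mp hne)]
    norm_num
  have hsum : ∑ v ∈ A₀, (#(A₀.filter (T v ·)) : ℝ) = #A₀ * (#A₀ - 1) / 2 := by
    rw [← Nat.cast_choose_two, ← hT.sum_card_out, Nat.cast_sum]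
  have hsumP : ∑ v ∈ P, (#(A₀.filter (T v ·)) : ℝ) ≤ #P * #A₀ := by
    simpa using sum_le_card_nsmul P _ (#A₀ : ℝ) fun v _ => Nat.cast_le.mpr (card_filter_le _ _)
  have hsum_sdiff : ∑ v ∈ A₀ \ P, (#(A₀.filter (T v ·)) : ℝ)
      ≤ (1/4 + δ) * n * #(A₀ \ P) - ((1/4 + δ) * n - n / 5) * #(S \ P) := by
    refine sum_le_mul_card_sub_of_le_on_subset (sdiff_subset_sdiff (filter_subset _ _) le_rfl)
      (fun v hv => ?_) (fun v hv => (mem_filter.mp (mem_sdiff.mp hv).1).2)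
    obtain ⟨hvA, hvP⟩ := mem_sdiff.mp hv
    have hin : (1/4 - δ) * n < #(A₀.filter (T · v)) :=
      not_le.mp fun h => hvP (mem_filter.mpr ⟨hvA, h⟩)
    linarith [hT.card_out_le_of_lt_card_in hvA hin]
  have hcard_sdiff : (#(A₀ \ P) : ℝ) = #A₀ - #P := by
    rw [eq_sub_iff_add_eq, ← Nat.cast_add, card_sdiff_add_card_eq_card (filter_subset _ _)]
  have hcardS : (#S : ℝ) ≤ #(S \ P) + #P := by exact_mod_cast card_le_card_sdiff_add_card
  rw [← sum_sdiff (filter_subset _ A₀ : P ⊆ A₀)] at hsum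
  have hn_pos : (0 : ℝ) < n := by nlinarith
  -- divided by `n`: `(1/20 + δ) |S \ P| ≤ δn/2 + |P|/4 + 1/4 ≤ 11δn/16`, as `1/4 ≤ δn/8`
  have hx : (#(S \ P) : ℝ) ≤ 55 / 4 * δ * n := by
    nlinarith [(#P).cast_nonneg (α := ℝ), (#(S \ P)).cast_nonneg (α := ℝ)]
  linarith
end

section
/- For ε sufficiently small and n sufficiently large: if T is an n-vertex tournament with δ⁰(T) ≥ ⌊(n+2)/4⌋ admitting a balanced bipartition V(T) = A₀ ∪ B₀ with e(A₀,B₀) ≥ (1−ε)|A₀||B₀|, then T admits a partition V(T) = A ∪ B ∪ X with |A|, |B| ≥ (1 − ε^{1/3})n/2, δ⁰(T[A]), δ⁰(T[B]) ≥ (1/6 − ε^{1/3})n, and e(A,B) ≥ (1 − ε^{1/3})|A||B|. -/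
open Finset

/-! Let `D = ⌊(n+2)/4⌋` and let `S` be one side of the bipartition. Every vertex of `S` has
in-degree at least `D`, while `T[S]` has only `|S|(|S|-1)/2 ≤ |S| D` edges, so the in-degrees
inside `S` deviate from `D` by at most `2 e(Sᶜ, S) ≤ ε n² / 2` in total. By Markov, at most
`ε^{1/3} n / 4` vertices deviate by `2 ε^{2/3} n` or more; removing them leaves a set in which
every in- and out-degree is close to `n / 4`. The side `B₀` is the side `A₀` of the reversed
tournament, and the few backward edges between the cleaned sides are at most `e(B₀, A₀)`. -/

variable {V : Type*} {T : V → V → Prop}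

lemma IsTournament.flip (hT : IsTournament T) : IsTournament (flip T) :=
  ⟨hT.1, fun u v huv => hT.2 v u huv.symm⟩

instance (T : V → V → Prop) [DecidableRel T] : DecidableRel (flip T) :=
  fun u v => ‹DecidableRel T› v u

lemma eCount_eq_sum_card_filter_left (T : V → V → Prop) [DecidableRel T] (S R : Finset V) :
    eCount T S R = ∑ u ∈ S, (R.filter (fun w => T u w)).card := by
  simp only [eCount, card_filter, sum_product]

lemma eCount_eq_sum_card_filter_right (T : V → V → Prop) [DecidableRel T] (S R : Finset V) :
    eCount T S R = ∑ v ∈ R, (S.filter (fun u => T u v)).card := by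
  simp only [eCount, card_filter, sum_product_right]

lemma inDeg_eq_card_filter_add_card_filter_compl [Fintype V] [DecidableEq V]
    (T : V → V → Prop) [DecidableRel T] (S : Finset V) (v : V) :
    inDeg T v = (S.filter (fun u => T u v)).card + (Sᶜ.filter (fun u => T u v)).card := by
  rw [inDeg, ← S.union_compl, filter_union,
    card_union_of_disjoint (disjoint_filter_filter disjoint_compl_right)]

variable [DecidableRel T]

lemma eCount_mono {S S' R R' : Finset V} (hS : S ⊆ S') (hR : R ⊆ R') :
    eCount T S R ≤ eCount T S' R' :=
  card_le_card (filter_subset_filter _ (product_subset_product hS hR))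

lemma eCount_flip (S R : Finset V) : eCount (flip T) S R = eCount T R S := by
  rw [eCount_eq_sum_card_filter_right, eCount_eq_sum_card_filter_left]
  rfl

lemma card_filter_le_card_filter_add_card_sdiff [DecidableEq V] (S S' : Finset V)
    (p : V → Prop) [DecidablePred p] :
    (S.filter p).card ≤ (S'.filter p).card + (S \ S').card := by
  refine (card_le_card fun u hu => ?_).trans (card_union_le _ _)
  rw [mem_filter] at hu
  by_cases hu' : u ∈ S'
  · exact mem_union_left _ (mem_filter.2 ⟨hu', hu.2⟩)
  · exact mem_union_right _ (mem_sdiff.2 ⟨hu.1, hu'⟩)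

namespace IsTournament

variable [DecidableEq V]

lemma card_filter_in_add_card_filter_out (hT : IsTournament T) (S : Finset V) (v : V) :
    (S.filter (fun u => T u v)).card + (S.filter (fun u => T v u)).card = (S.erase v).card := by
  rw [← card_filter_add_card_filter_not (s := S.erase v) (p := fun u => T u v)]
  congr 2 <;> ext u <;> by_cases huv : u = v
  · simp [huv, hT.1 v]
  · simp [huv]
  · simp [huv, hT.1 v]
  · simp [huv, hT.2 v u (Ne.symm huv)]

lemma eCount_add_eCount_swap (hT : IsTournament T) {S R : Finset V} (h : Disjoint S R) :
    eCount T S R + eCount T R S = S.card * R.card := by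
  rw [eCount_eq_sum_card_filter_left T S R, eCount_eq_sum_card_filter_right T R S,
    ← sum_add_distrib, ← smul_eq_mul, ← sum_const]
  refine sum_congr rfl fun u hu => ?_
  rw [add_comm, hT.card_filter_in_add_card_filter_out,
    erase_eq_of_notMem (disjoint_left.1 h hu)]

lemma two_mul_sum_card_filter_in_add_card (hT : IsTournament T) (S : Finset V) :
    2 * ∑ v ∈ S, (S.filter (fun u => T u v)).card + S.card = S.card * S.card := by
  have hsum : ∑ v ∈ S, ((S.filter (fun u => T u v)).card
      + (S.filter (fun u => T v u)).card + 1) = S.card * S.card := by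
    rw [← smul_eq_mul, ← sum_const]
    refine sum_congr rfl fun v hv => ?_
    rw [hT.card_filter_in_add_card_filter_out, card_erase_add_one hv]
  have hsum_in_eq_out := (eCount_eq_sum_card_filter_right T S S).symm.trans
    (eCount_eq_sum_card_filter_left T S S)
  rw [sum_add_distrib, sum_add_distrib, ← hsum_in_eq_out, sum_const, smul_eq_mul, mul_one] at hsum
  omega

lemma one_sub_mul_le_eCount_iff (hT : IsTournament T) {S R : Finset V} (h : Disjoint S R)
    (c : ℝ) :
    (1 - c) * S.card * R.card ≤ eCount T S R ↔
      (eCount T R S : ℝ) ≤ c * S.card * R.card := by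
  have hsum : (eCount T S R : ℝ) + eCount T R S = S.card * R.card := by
    exact_mod_cast hT.eCount_add_eCount_swap h
  constructor <;> intro <;> nlinarith

lemma eCount_swap_le_of_one_sub_mul_le (hT : IsTournament T) {S R : Finset V}
    (h : Disjoint S R) {ε : ℝ} (hε : 0 ≤ ε)
    (hcut : (1 - ε) * S.card * R.card ≤ eCount T S R) :
    (eCount T R S : ℝ) ≤ ε * (S.card + R.card) ^ 2 / 4 := by
  have hcross := (hT.one_sub_mul_le_eCount_iff h ε).1 hcut
  have hprod : (S.card : ℝ) * R.card ≤ (S.card + R.card) ^ 2 / 4 := by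
    nlinarith [sq_nonneg ((S.card : ℝ) - R.card)]
  nlinarith [mul_le_mul_of_nonneg_left hprod hε]

variable [Fintype V]

lemma sum_abs_card_filter_sub_le (hT : IsTournament T) (S : Finset V) {D : ℕ}
    (hD : ∀ v ∈ S, D ≤ inDeg T v) (hS : S.card ≤ 2 * D + 1) :
    ∑ v ∈ S, |((S.filter (fun u => T u v)).card : ℝ) - D| ≤ 2 * eCount T Sᶜ S := by
  have hpt : ∀ v ∈ S, |((S.filter (fun u => T u v)).card : ℝ) - D|
      ≤ ((S.filter (fun u => T u v)).card - D) + 2 * (Sᶜ.filter (fun u => T u v)).card := by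
    intro v hv
    have hDv : (D : ℝ) ≤
        (S.filter (fun u => T u v)).card + (Sᶜ.filter (fun u => T u v)).card := by
      exact_mod_cast inDeg_eq_card_filter_add_card_filter_compl T S v ▸ hD v hv
    have hout : (0 : ℝ) ≤ (Sᶜ.filter (fun u => T u v)).card := Nat.cast_nonneg _
    -- `|x| ≤ x + 2y` as soon as `y ≥ 0` and `x + y ≥ 0`
    exact abs_le.2 ⟨by linarith, by linarith⟩
  have hin : 2 * ∑ v ∈ S, ((S.filter (fun u => T u v)).card : ℝ) + S.card
      = S.card * S.card := by
    exact_mod_cast hT.two_mul_sum_card_filter_in_add_card S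
  have hScard : (S.card : ℝ) ≤ 2 * D + 1 := by exact_mod_cast hS
  calc _ ≤ ∑ v ∈ S, (((S.filter (fun u => T u v)).card - D)
          + 2 * (Sᶜ.filter (fun u => T u v)).card : ℝ) := sum_le_sum hpt
    _ = ∑ v ∈ S, ((S.filter (fun u => T u v)).card : ℝ) - S.card * D
          + 2 * eCount T Sᶜ S := by
        rw [eCount_eq_sum_card_filter_right, sum_add_distrib, sum_sub_distrib, ← mul_sum]
        simp
    _ ≤ 2 * eCount T Sᶜ S := by nlinarith [(S.card).cast_nonneg (α := ℝ)]

lemma exists_subset_card_filter_ge (hT : IsTournament T) (S : Finset V) {D : ℕ}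
    (hD : ∀ v ∈ S, D ≤ inDeg T v) (hS : S.card ≤ 2 * D + 1) (τ : ℝ) :
    ∃ S' ⊆ S, ((S \ S').card : ℝ) * τ ≤ 2 * eCount T Sᶜ S ∧
      ∀ v ∈ S', (D : ℝ) - τ - (S \ S').card ≤ (S'.filter (fun u => T u v)).card ∧
        (S.card : ℝ) - 1 - D - τ - (S \ S').card ≤ (S'.filter (fun u => T v u)).card := by
  set dev : V → ℝ := fun v => |((S.filter (fun u => T u v)).card : ℝ) - D|
  set S' := S.filter (fun v => dev v < τ)
  refine ⟨S', filter_subset _ _, ?_, fun v hv => ?_⟩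
  · rw [← filter_not]
    calc _ ≤ ∑ v ∈ S.filter (fun v => ¬ dev v < τ), dev v := by
          simpa using card_nsmul_le_sum _ dev τ fun v hv => not_lt.1 (mem_filter.1 hv).2
      _ ≤ ∑ v ∈ S, dev v := sum_le_sum_of_subset_of_nonneg (filter_subset _ _)
          fun v _ _ => abs_nonneg _
      _ ≤ _ := hT.sum_abs_card_filter_sub_le S hD hS
  · obtain ⟨hvS, hdev⟩ := mem_filter.1 hv
    have hin_out : ((S.filter (fun u => T u v)).card : ℝ)
        + (S.filter (fun u => T v u)).card + 1 = S.card := by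
      exact_mod_cast (congrArg (· + 1) (hT.card_filter_in_add_card_filter_out S v)).trans
        (card_erase_add_one hvS)
    have hin : ((S.filter (fun u => T u v)).card : ℝ)
        ≤ (S'.filter (fun u => T u v)).card + (S \ S').card := by
      exact_mod_cast card_filter_le_card_filter_add_card_sdiff S S' _
    have hout : ((S.filter (fun u => T v u)).card : ℝ)
        ≤ (S'.filter (fun u => T v u)).card + (S \ S').card := by
      exact_mod_cast card_filter_le_card_filter_add_card_sdiff S S' _
    obtain ⟨hlo, hhi⟩ := abs_lt.1 hdev
    constructor <;> linarith

lemma exists_large_subset_semidegree_ge (hT : IsTournament T) {n : ℕ} (S : Finset V)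
    (hD : ∀ v ∈ S, (n + 2) / 4 ≤ inDeg T v) (hS₁ : n / 2 ≤ S.card)
    (hS₂ : S.card ≤ (n + 1) / 2)
    {c : ℝ} (hc : 0 < c) (hc10 : c ≤ 1 / 10) (hcn : 24 ≤ c * n)
    (hE : (eCount T Sᶜ S : ℝ) ≤ c ^ 3 * n ^ 2 / 4) :
    ∃ S' ⊆ S, (1 - c) * n / 2 ≤ S'.card ∧ ∀ v ∈ S',
      (1 / 6 - c) * n ≤ (S'.filter (fun u => T u v)).card ∧
      (1 / 6 - c) * n ≤ (S'.filter (fun u => T v u)).card := by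
  obtain ⟨S', hS'S, hbad, hdeg⟩ :=
    hT.exists_subset_card_filter_ge S hD (by omega) (2 * c ^ 2 * n)
  have hDlo : (n : ℝ) ≤ 4 * ((n + 2) / 4 : ℕ) + 1 := by norm_cast; omega
  have hDhi : 4 * (((n + 2) / 4 : ℕ) : ℝ) ≤ n + 2 := by norm_cast; omega
  have hSlo : (n : ℝ) ≤ 2 * S.card + 1 := by norm_cast; omega
  have hsplit : ((S \ S').card : ℝ) + S'.card = S.card := by
    exact_mod_cast card_sdiff_add_card_eq_card hS'S
  have hn : (240 : ℝ) ≤ n := by nlinarith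
  have hc2n : c ^ 2 * n ≤ c * n / 10 := by nlinarith
  have hbad' : ((S \ S').card : ℝ) ≤ c * n / 4 := by
    refine le_of_mul_le_mul_right ?_ (by positivity : 0 < 2 * c ^ 2 * n)
    calc _ ≤ 2 * (eCount T Sᶜ S : ℝ) := hbad
      _ ≤ c * n / 4 * (2 * c ^ 2 * n) := by linarith
  refine ⟨S', hS'S, by linarith, fun v hv => ⟨?_, ?_⟩⟩
  · linarith [(hdeg v hv).1]
  · linarith [(hdeg v hv).2]

end IsTournament

lemma rpow_one_third_pow_three {ε : ℝ} (hε : 0 ≤ ε) : (ε ^ ((1 : ℝ) / 3)) ^ 3 = ε := by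
  simpa using Real.rpow_inv_natCast_pow hε (n := 3) (by norm_num)

lemma rpow_one_third_bounds {ε : ℝ} (hε : 0 < ε) (hε₀ : ε ≤ 1 / 1000) {n : ℕ}
    (hn : ⌈24 / ε⌉₊ ≤ n) :
    0 < ε ^ ((1 : ℝ) / 3) ∧ ε ^ ((1 : ℝ) / 3) ≤ 1 / 10 ∧
      24 ≤ ε ^ ((1 : ℝ) / 3) * n := by
  set c := ε ^ ((1 : ℝ) / 3)
  have hc3 : c ^ 3 = ε := rpow_one_third_pow_three hε.le
  have hc : 0 < c := by positivity
  have hεn : 24 ≤ ε * n := (div_le_iff₀' hε).1 ((Nat.le_ceil _).trans (by exact_mod_cast hn))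
  have hεc : ε ≤ c := by rw [← hc3]; nlinarith [mul_pos hc hc]
  refine ⟨hc, (pow_le_pow_iff_left₀ hc.le (by norm_num) three_ne_zero).1 (by linarith), ?_⟩
  nlinarith

lemma cube_mul_sq_div_four_le {c n x y : ℝ} (hc : 0 ≤ c) (hc10 : c ≤ 1 / 10) (hn : 0 ≤ n)
    (hx : (1 - c) * n / 2 ≤ x) (hy : (1 - c) * n / 2 ≤ y) :
    c ^ 3 * n ^ 2 / 4 ≤ c * x * y := by
  have hx' : 9 * n / 20 ≤ x := by nlinarith
  have hy' : 9 * n / 20 ≤ y := by nlinarith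
  have hxy : 9 * n / 20 * (9 * n / 20) ≤ x * y := mul_le_mul hx' hy' (by positivity) (by linarith)
  have hcc : c ^ 2 ≤ 1 / 100 := by nlinarith
  nlinarith [mul_le_mul_of_nonneg_left hxy hc,
    mul_le_mul_of_nonneg_right hcc (mul_nonneg hc (sq_nonneg n))]

theorem stmt_7 : ∃ ε₀ : ℝ, 0 < ε₀ ∧ ∀ ε : ℝ, 0 < ε → ε ≤ ε₀ →
    ∃ n₀ : ℕ, ∀ n : ℕ, n₀ ≤ n →
    ∀ (V : Type) [Fintype V] [DecidableEq V] (T : V → V → Prop) [DecidableRel T],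
      IsTournament T → Fintype.card V = n →
      (∀ v : V, (n + 2)/4 ≤ inDeg T v ∧ (n + 2)/4 ≤ outDeg T v) →
      (∃ A₀ B₀ : Finset V, Disjoint A₀ B₀ ∧ A₀ ∪ B₀ = Finset.univ ∧ A₀.card = n/2 ∧
          (1 - ε) * A₀.card * B₀.card ≤ (eCount T A₀ B₀ : ℝ)) →
      ∃ A B X : Finset V, Disjoint A B ∧ Disjoint A X ∧ Disjoint B X ∧
        A ∪ B ∪ X = Finset.univ ∧
        (1 - ε ^ ((1:ℝ)/3)) * n / 2 ≤ (A.card : ℝ) ∧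
        (1 - ε ^ ((1:ℝ)/3)) * n / 2 ≤ (B.card : ℝ) ∧
        (∀ v ∈ A, (1/6 - ε ^ ((1:ℝ)/3)) * n ≤ ((A.filter (fun u => T u v)).card : ℝ) ∧
                  (1/6 - ε ^ ((1:ℝ)/3)) * n ≤ ((A.filter (fun u => T v u)).card : ℝ)) ∧
        (∀ v ∈ B, (1/6 - ε ^ ((1:ℝ)/3)) * n ≤ ((B.filter (fun u => T u v)).card : ℝ) ∧
                  (1/6 - ε ^ ((1:ℝ)/3)) * n ≤ ((B.filter (fun u => T v u)).card : ℝ)) ∧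
        (1 - ε ^ ((1:ℝ)/3)) * A.card * B.card ≤ (eCount T A B : ℝ) := by
  refine ⟨1 / 1000, by norm_num, fun ε hε hε₀ => ⟨⌈24 / ε⌉₊,
    fun n hn V _ _ T _ hT hV hdeg ⟨A₀, B₀, hdisj, hunion, hA₀, hcut⟩ => ?_⟩⟩
  obtain ⟨hc, hc10, hcn⟩ := rpow_one_third_bounds hε hε₀ hn
  set c := ε ^ ((1 : ℝ) / 3)
  have hcard : A₀.card + B₀.card = n := by
    rw [← card_union_of_disjoint hdisj, hunion, card_univ, hV]
  have hE : (eCount T B₀ A₀ : ℝ) ≤ c ^ 3 * n ^ 2 / 4 := by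
    rw [rpow_one_third_pow_three hε.le, ← hcard]
    exact_mod_cast hT.eCount_swap_le_of_one_sub_mul_le hdisj hε.le hcut
  have hB₀ : A₀ᶜ = B₀ := (isCompl_iff.2 ⟨hdisj, codisjoint_iff.2 hunion⟩).compl_eq
  obtain ⟨A, hAA₀, hAcard, hAdeg⟩ := hT.exists_large_subset_semidegree_ge A₀
    (fun v _ => (hdeg v).1) (by omega) (by omega) hc hc10 hcn (by rwa [hB₀])
  obtain ⟨B, hBB₀, hBcard, hBdeg⟩ := hT.flip.exists_large_subset_semidegree_ge B₀
    (fun v _ => (hdeg v).2) (by omega) (by omega) hc hc10 hcn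
    (by rwa [← hB₀, compl_compl, eCount_flip, hB₀])
  have hAB : Disjoint A B := hdisj.mono hAA₀ hBB₀
  refine ⟨A, B, (A ∪ B)ᶜ, hAB, disjoint_compl_right.mono_left subset_union_left,
    disjoint_compl_right.mono_left subset_union_right, union_compl _, hAcard, hBcard, hAdeg,
    fun v hv => (hBdeg v hv).symm, (hT.one_sub_mul_le_eCount_iff hAB _).2 ?_⟩
  calc (eCount T B A : ℝ) ≤ eCount T B₀ A₀ := by exact_mod_cast eCount_mono hBB₀ hAA₀
    _ ≤ c ^ 3 * n ^ 2 / 4 := hE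
    _ ≤ c * A.card * B.card := cube_mul_sq_div_four_le hc.le hc10 n.cast_nonneg hAcard hBcard
end

section
/- Let T be a tournament with vertex partition V(T) = A ∪ B ∪ X and let S ⊆ V(T) be such that: |S ∩ X| < |S|/5; δ⁰(T[S]) ≥ |S|/5; δ⁰(T[A ∩ S]) ≥ (3/10)|A ∩ S| and δ⁰(T[B ∩ S]) ≥ (3/10)|B ∩ S|; there is a directed path in T[S] from a vertex of A ∩ S to a vertex of B ∩ S; and there is a directed path in T[S] from a vertex of B ∩ S to a vertex of A ∩ S. Then T[S] is strongly connected, hence Hamiltonian. -/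
open Finset

/-!
`T[A ∩ S]` and `T[B ∩ S]` are strongly connected: if the set `W` of vertices reachable from `u`
misses `v`, then a vertex of `W` whose out-degree in `T[W]` is below average and a vertex outside
`W` whose in-degree in `T[C \ W]` is below average have semidegree sum at most `(|C| - 2) / 2`,
against `δ⁰ ≥ 3|C|/10`. The two given paths merge these into one strong component, and since
`|S ∩ X| < |S|/5 ≤ δ⁰(T[S])`, every vertex of `S` has an out- and an in-neighbour in it.
-/

section Tournament

variable {V : Type*} {T : V → V → Prop}

def inducedRel (T : V → V → Prop) (S : Finset V) : V → V → Prop :=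
  fun x y => x ∈ S ∧ y ∈ S ∧ T x y

def StronglyConnectedOn (R : V → V → Prop) (C : Finset V) : Prop :=
  ∀ u ∈ C, ∀ v ∈ C, Relation.ReflTransGen R u v

theorem IsTournament.swap_s8 (hT : IsTournament T) : IsTournament (fun x y => T y x) :=
  ⟨hT.1, fun u v huv => hT.2 v u huv.symm⟩

theorem IsTournament.card_out_add_card_in_s8 [DecidableEq V] [DecidableRel T]
    (hT : IsTournament T) {D : Finset V} {w : V} (hw : w ∈ D) :
    #{z ∈ D | T w z} + #{z ∈ D | T z w} = #D - 1 := by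
  have hout : {z ∈ D | T w z} = {z ∈ D.erase w | T w z} := by
    ext z
    simp only [mem_filter, mem_erase]
    exact ⟨fun ⟨hz, h⟩ => ⟨⟨fun he => hT.1 w (he ▸ h), hz⟩, h⟩,
      fun ⟨⟨_, hz⟩, h⟩ => ⟨hz, h⟩⟩
  have hin : {z ∈ D | T z w} = {z ∈ D.erase w | ¬ T w z} := by
    ext z
    simp only [mem_filter, mem_erase]
    constructor
    · rintro ⟨hz, h⟩
      have hne : z ≠ w := fun he => hT.1 w (he ▸ h)
      exact ⟨⟨hne, hz⟩, (hT.2 z w hne).mp h⟩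
    · rintro ⟨⟨hne, hz⟩, h⟩
      exact ⟨hz, (hT.2 z w hne).mpr h⟩
  rw [hout, hin, card_filter_add_card_filter_not, card_erase_of_mem hw]

theorem IsTournament.two_mul_sum_card_out [DecidableEq V] [DecidableRel T]
    (hT : IsTournament T) (D : Finset V) :
    2 * ∑ w ∈ D, #{z ∈ D | T w z} = #D * (#D - 1) := by
  have hswap : ∑ w ∈ D, #{z ∈ D | T w z} = ∑ w ∈ D, #{z ∈ D | T z w} := by
    simp only [card_filter]
    exact sum_comm
  calc 2 * ∑ w ∈ D, #{z ∈ D | T w z}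
      = ∑ w ∈ D, (#{z ∈ D | T w z} + #{z ∈ D | T z w}) := by
        rw [two_mul, sum_add_distrib, ← hswap]
    _ = ∑ _w ∈ D, (#D - 1) := sum_congr rfl fun w hw => hT.card_out_add_card_in_s8 hw
    _ = #D * (#D - 1) := by rw [sum_const, smul_eq_mul]

theorem IsTournament.exists_two_mul_card_out_lt [DecidableEq V] [DecidableRel T]
    (hT : IsTournament T) {D : Finset V} (hD : D.Nonempty) :
    ∃ w ∈ D, 2 * #{z ∈ D | T w z} < #D := by
  have hsum : ∑ w ∈ D, (2 * #{z ∈ D | T w z} + 1) ≤ ∑ _w ∈ D, #D := by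
    have hpos : 0 < #D := card_pos.mpr hD
    rw [sum_add_distrib, ← mul_sum, hT.two_mul_sum_card_out, sum_const, smul_eq_mul,
      sum_const, smul_eq_mul, mul_one, ← mul_add_one, Nat.sub_one_add_one_eq_of_pos hpos]
  exact exists_le_of_sum_le hD hsum

theorem IsTournament.exists_two_mul_card_in_lt [DecidableEq V] [DecidableRel T]
    (hT : IsTournament T) {D : Finset V} (hD : D.Nonempty) :
    ∃ w ∈ D, 2 * #{z ∈ D | T z w} < #D :=
  hT.swap_s8.exists_two_mul_card_out_lt hD

-- Since no edge leaves `W`, the out-degree of `w` and the in-degree of `z` in `C` are those in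
-- `W` and in `C \ W`, where each can be chosen below average.
theorem IsTournament.exists_card_out_add_card_in_of_closed [DecidableEq V] [DecidableRel T]
    (hT : IsTournament T)
    {C W : Finset V} (hWC : W ⊆ C) (hW : W.Nonempty) (hCW : (C \ W).Nonempty)
    (hclosed : ∀ w ∈ W, ∀ z ∈ C, T w z → z ∈ W) :
    ∃ w ∈ W, ∃ z ∈ C \ W, 2 * (#{y ∈ C | T w y} + #{y ∈ C | T y z}) + 2 ≤ #C := by
  obtain ⟨w, hw, hw_out⟩ := hT.exists_two_mul_card_out_lt hW
  obtain ⟨z, hz, hz_in⟩ := hT.exists_two_mul_card_in_lt hCW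
  have hout : {y ∈ C | T w y} = {y ∈ W | T w y} := by
    ext y
    simp only [mem_filter]
    exact ⟨fun ⟨hy, h⟩ => ⟨hclosed w hw y hy h, h⟩, fun ⟨hy, h⟩ => ⟨hWC hy, h⟩⟩
  have hin : {y ∈ C | T y z} = {y ∈ C \ W | T y z} := by
    ext y
    simp only [mem_filter, mem_sdiff]
    refine ⟨fun ⟨hy, h⟩ => ⟨⟨hy, fun hyW => ?_⟩, h⟩, fun ⟨⟨hy, _⟩, h⟩ => ⟨hy, h⟩⟩
    exact (mem_sdiff.mp hz).2 (hclosed y hyW z (mem_sdiff.mp hz).1 h)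
  have hcard : #(C \ W) + #W = #C := card_sdiff_add_card_eq_card hWC
  exact ⟨w, hw, z, hz, by rw [hout, hin]; omega⟩

theorem IsTournament.stronglyConnectedOn_of_semidegree [DecidableEq V] [DecidableRel T]
    (hT : IsTournament T) (C : Finset V) (δ : ℝ) (hδ : (#C : ℝ) < 4 * δ + 2)
    (hdeg : ∀ v ∈ C, δ ≤ (#{u ∈ C | T u v} : ℝ) ∧ δ ≤ (#{u ∈ C | T v u} : ℝ)) :
    StronglyConnectedOn (inducedRel T C) C := by
  classical
  intro u hu v hv
  by_contra huv
  set W := {z ∈ C | Relation.ReflTransGen (inducedRel T C) u z}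
  have hWC : W ⊆ C := filter_subset _ _
  have hclosed : ∀ w ∈ W, ∀ z ∈ C, T w z → z ∈ W := fun w hw z hz h =>
    mem_filter.mpr ⟨hz, (mem_filter.mp hw).2.tail ⟨hWC hw, hz, h⟩⟩
  have huW : u ∈ W := mem_filter.mpr ⟨hu, .refl⟩
  have hvW : v ∈ C \ W := mem_sdiff.mpr ⟨hv, fun h => huv (mem_filter.mp h).2⟩
  obtain ⟨w, hw, z, hz, hsmall⟩ :=
    hT.exists_card_out_add_card_in_of_closed hWC ⟨u, huW⟩ ⟨v, hvW⟩ hclosed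
  have hsmall' : 2 * ((#{y ∈ C | T w y} : ℝ) + #{y ∈ C | T y z}) + 2 ≤ #C := by
    exact_mod_cast hsmall
  linarith [(hdeg w (hWC hw)).2, (hdeg z (mem_sdiff.mp hz).1).1]

theorem StronglyConnectedOn.mono_rel {R R' : V → V → Prop} {C : Finset V}
    (hC : StronglyConnectedOn R C) (hRR' : ∀ x y, R x y → R' x y) :
    StronglyConnectedOn R' C :=
  fun u hu v hv => Relation.ReflTransGen.mono hRR' _ _ (hC u hu v hv)

theorem inducedRel_mono {S S' : Finset V} (h : S ⊆ S') (x y : V) :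
    inducedRel T S x y → inducedRel T S' x y :=
  fun ⟨hx, hy, hxy⟩ => ⟨h hx, h hy, hxy⟩

theorem StronglyConnectedOn.union [DecidableEq V] {R : V → V → Prop} {C₁ C₂ : Finset V}
    (h₁ : StronglyConnectedOn R C₁) (h₂ : StronglyConnectedOn R C₂)
    (h₁₂ : ∃ a ∈ C₁, ∃ b ∈ C₂, Relation.ReflTransGen R a b)
    (h₂₁ : ∃ b ∈ C₂, ∃ a ∈ C₁, Relation.ReflTransGen R b a) :
    StronglyConnectedOn R (C₁ ∪ C₂) := by
  obtain ⟨a, ha, b, hb, hab⟩ := h₁₂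
  obtain ⟨b', hb', a', ha', hba⟩ := h₂₁
  intro u hu v hv
  rcases mem_union.mp hu with hu | hu <;> rcases mem_union.mp hv with hv | hv
  · exact h₁ u hu v hv
  · exact ((h₁ u hu a ha).trans hab).trans (h₂ b hb v hv)
  · exact ((h₂ u hu b' hb').trans hba).trans (h₁ a' ha' v hv)
  · exact h₂ u hu v hv

theorem StronglyConnectedOn.of_exists_succ_pred {R : V → V → Prop} {C D : Finset V}
    (hC : StronglyConnectedOn R C) (hsucc : ∀ u ∈ D, ∃ c ∈ C, R u c)
    (hpred : ∀ v ∈ D, ∃ c ∈ C, R c v) : StronglyConnectedOn R D := by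
  intro u hu v hv
  obtain ⟨c, hc, huc⟩ := hsucc u hu
  obtain ⟨c', hc', hcv⟩ := hpred v hv
  exact ((Relation.ReflTransGen.single huc).trans (hC c hc c' hc')).tail hcv

end Tournament

theorem stmt_8_general {V : Type*} [Fintype V] [DecidableEq V]
    (T : V → V → Prop) [DecidableRel T] (hT : IsTournament T)
    (A B X S : Finset V)
    (hunion : A ∪ B ∪ X = Finset.univ)
    (h1 : ((S ∩ X).card : ℝ) < (S.card : ℝ) / 5)
    (h2 : ∀ v ∈ S, (S.card : ℝ)/5 ≤ ((S.filter (fun u => T u v)).card : ℝ) ∧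
                   (S.card : ℝ)/5 ≤ ((S.filter (fun u => T v u)).card : ℝ))
    (h3 : ∀ v ∈ A ∩ S,
        (3/10 : ℝ) * ((A ∩ S).card : ℝ) ≤ (((A ∩ S).filter (fun u => T u v)).card : ℝ) ∧
        (3/10 : ℝ) * ((A ∩ S).card : ℝ) ≤ (((A ∩ S).filter (fun u => T v u)).card : ℝ))
    (h4 : ∀ v ∈ B ∩ S,
        (3/10 : ℝ) * ((B ∩ S).card : ℝ) ≤ (((B ∩ S).filter (fun u => T u v)).card : ℝ) ∧
        (3/10 : ℝ) * ((B ∩ S).card : ℝ) ≤ (((B ∩ S).filter (fun u => T v u)).card : ℝ))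
    (h5 : ∃ a ∈ A ∩ S, ∃ b ∈ B ∩ S,
        Relation.ReflTransGen (fun x y => x ∈ S ∧ y ∈ S ∧ T x y) a b)
    (h6 : ∃ b ∈ B ∩ S, ∃ a ∈ A ∩ S,
        Relation.ReflTransGen (fun x y => x ∈ S ∧ y ∈ S ∧ T x y) b a) :
    ∀ u ∈ S, ∀ v ∈ S, Relation.ReflTransGen (fun x y => x ∈ S ∧ y ∈ S ∧ T x y) u v := by
  have strong_of_semidegree := fun (C : Finset V) (hCS : C ⊆ S) hdeg =>
    (hT.stronglyConnectedOn_of_semidegree C (3 / 10 * #C)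
      (by linarith [(#C).cast_nonneg (α := ℝ)]) hdeg).mono_rel (inducedRel_mono hCS)
  have hAB := (strong_of_semidegree _ inter_subset_right h3).union
    (strong_of_semidegree _ inter_subset_right h4) h5 h6
  have hneighbour : ∀ p : V → Prop, ∀ [DecidablePred p], (#S : ℝ) / 5 ≤ #{u ∈ S | p u} →
      ∃ y ∈ A ∩ S ∪ B ∩ S, y ∈ S ∧ p y := by
    intro p _ hp
    obtain ⟨y, hy, hyX⟩ := exists_mem_notMem_of_card_lt_card (s := S ∩ X) (t := {u ∈ S | p u})
      (by exact_mod_cast h1.trans_le hp)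
    have hyS := (mem_filter.mp hy).1
    have hyAB : y ∈ A ∪ B ∪ X := hunion ▸ mem_univ y
    refine ⟨y, ?_, hyS, (mem_filter.mp hy).2⟩
    simp only [mem_union, mem_inter] at hyAB hyX ⊢
    tauto
  refine hAB.of_exists_succ_pred (fun u hu => ?_) (fun v hv => ?_)
  · obtain ⟨y, hy, hyS, huy⟩ := hneighbour (T u) (h2 u hu).2
    exact ⟨y, hy, hu, hyS, huy⟩
  · obtain ⟨y, hy, hyS, hyv⟩ := hneighbour (T · v) (h2 v hv).1
    exact ⟨y, hy, hyS, hv, hyv⟩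

theorem stmt_8 {V : Type*} [Fintype V] [DecidableEq V]
    (T : V → V → Prop) [DecidableRel T] (hT : IsTournament T)
    (A B X S : Finset V)
    (hAB : Disjoint A B) (hAX : Disjoint A X) (hBX : Disjoint B X)
    (hunion : A ∪ B ∪ X = Finset.univ)
    (h1 : ((S ∩ X).card : ℝ) < (S.card : ℝ) / 5)
    (h2 : ∀ v ∈ S, (S.card : ℝ)/5 ≤ ((S.filter (fun u => T u v)).card : ℝ) ∧
                   (S.card : ℝ)/5 ≤ ((S.filter (fun u => T v u)).card : ℝ))
    (h3 : ∀ v ∈ A ∩ S,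
        (3/10 : ℝ) * ((A ∩ S).card : ℝ) ≤ (((A ∩ S).filter (fun u => T u v)).card : ℝ) ∧
        (3/10 : ℝ) * ((A ∩ S).card : ℝ) ≤ (((A ∩ S).filter (fun u => T v u)).card : ℝ))
    (h4 : ∀ v ∈ B ∩ S,
        (3/10 : ℝ) * ((B ∩ S).card : ℝ) ≤ (((B ∩ S).filter (fun u => T u v)).card : ℝ) ∧
        (3/10 : ℝ) * ((B ∩ S).card : ℝ) ≤ (((B ∩ S).filter (fun u => T v u)).card : ℝ))
    (h5 : ∃ a ∈ A ∩ S, ∃ b ∈ B ∩ S,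
        Relation.ReflTransGen (fun x y => x ∈ S ∧ y ∈ S ∧ T x y) a b)
    (h6 : ∃ b ∈ B ∩ S, ∃ a ∈ A ∩ S,
        Relation.ReflTransGen (fun x y => x ∈ S ∧ y ∈ S ∧ T x y) b a) :
    ∀ u ∈ S, ∀ v ∈ S, Relation.ReflTransGen (fun x y => x ∈ S ∧ y ∈ S ∧ T x y) u v :=
  stmt_8_general T hT A B X S hunion h1 h2 h3 h4 h5 h6
end

section
/- For every k ≥ 1 there exist tournaments showing the degree bound ⌊(n+2)/4⌋ cannot be lowered: let n = 4k+2 and let T have vertex set A ∪ B with |A| = |B| = 2k+1, T[A] and T[B] k-regular tournaments, and every edge between A and B directed from A to B. Then δ⁰(T) = k, and for every S ⊆ V(T) intersecting both A and B, the induced subtournament T[S] is not strongly connected (hence not Hamiltonian). -/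
open Finset

theorem stmt_11 {V : Type*} [Fintype V] [DecidableEq V] (k : ℕ) (hk : 1 ≤ k)
    (hcard : Fintype.card V = 4*k + 2)
    (T : V → V → Prop) [DecidableRel T] (hT : IsTournament T)
    (A B : Finset V) (hdisj : Disjoint A B) (hunion : A ∪ B = Finset.univ)
    (hA : A.card = 2*k + 1) (hB : B.card = 2*k + 1)
    (hregA : ∀ v ∈ A, (A.filter (fun u => T u v)).card = k ∧ (A.filter (fun u => T v u)).card = k)
    (hregB : ∀ v ∈ B, (B.filter (fun u => T u v)).card = k ∧ (B.filter (fun u => T v u)).card = k)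
    (hAB : ∀ a ∈ A, ∀ b ∈ B, T a b) :
    minSemidegree T = k ∧
    ∀ S : Finset V, (S ∩ A).Nonempty → (S ∩ B).Nonempty →
      ¬ (∀ u ∈ S, ∀ v ∈ S, Relation.ReflTransGen (fun x y => x ∈ S ∧ y ∈ S ∧ T x y) u v) := by
  obtain ⟨hirr, hasym⟩ := hT
  have hne : ∀ a ∈ A, ∀ b ∈ B, a ≠ b := by
    intro a ha b hb h
    exact Finset.disjoint_left.mp hdisj ha (h ▸ hb)
  have hBA : ∀ b ∈ B, ∀ a ∈ A, ¬ T b a := fun b hb a ha =>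
    (hasym a b (hne a ha b hb)).mp (hAB a ha b hb)
  have hmemAB : ∀ v : V, v ∈ A ∨ v ∈ B := by
    intro v
    have := Finset.mem_univ v
    rw [← hunion, Finset.mem_union] at this
    exact this
  have hsplit : ∀ (p : V → Prop) [DecidablePred p],
      (Finset.univ.filter p).card = (A.filter p).card + (B.filter p).card := by
    intro p _
    rw [← hunion, Finset.filter_union,
      Finset.card_union_of_disjoint (Finset.disjoint_filter_filter hdisj)]
  have hmin : ∀ v : V, min (inDeg T v) (outDeg T v) = k := by
    intro v
    rcases hmemAB v with hv | hv
    · have hin : inDeg T v = k := by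
        rw [inDeg, hsplit, (hregA v hv).1]
        have : B.filter (fun u => T u v) = ∅ := by
          apply Finset.filter_eq_empty_iff.mpr
          intro b hb
          exact hBA b hb v hv
        rw [this]; simp
      have hout : outDeg T v = k + (2*k+1) := by
        rw [outDeg, hsplit, (hregA v hv).2]
        have : B.filter (fun u => T v u) = B := by
          apply Finset.filter_eq_self.mpr
          intro b hb
          exact hAB v hv b hb
        rw [this, hB]
      rw [hin, hout]
      omega
    · have hin : inDeg T v = k + (2*k+1) := by
        rw [inDeg, hsplit, (hregB v hv).1]
        have : A.filter (fun u => T u v) = A := by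
          apply Finset.filter_eq_self.mpr
          intro a ha
          exact hAB a ha v hv
        rw [this, hA]
        omega
      have hout : outDeg T v = k := by
        rw [outDeg, hsplit, (hregB v hv).2]
        have : A.filter (fun u => T v u) = ∅ := by
          apply Finset.filter_eq_empty_iff.mpr
          intro a ha
          exact hBA v hv a ha
        rw [this]; simp
      rw [hin, hout]
      omega
  have hne' : (Finset.univ : Finset V).Nonempty := by
    rw [← Finset.card_pos, Finset.card_univ, hcard]; omega
  constructor
  · rw [minSemidegree, dif_pos hne']
    apply le_antisymm
    · exact le_trans (Finset.inf'_le _ (Finset.mem_univ hne'.choose)) (hmin _).le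
    · apply Finset.le_inf'
      intro v _
      rw [hmin v]
  · intro S ⟨a, haS⟩ ⟨b, hbS⟩ hcon
    rw [Finset.mem_inter] at haS hbS
    have hstay : ∀ u v : V,
        Relation.ReflTransGen (fun x y => x ∈ S ∧ y ∈ S ∧ T x y) u v → u ∈ B → v ∈ B := by
      intro u v h hu
      induction h with
      | refl => exact hu
      | tail _ h2 ih =>
        obtain ⟨_, _, hT'⟩ := h2
        rcases hmemAB _ with hc | hc
        · exact absurd hT' (hBA _ ih _ hc)
        · exact hc
    have : a ∈ B := hstay b a (hcon b hbS.1 a haS.1) hbS.2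
    exact Finset.disjoint_left.mp hdisj haS.2 this
end

section
/- Let k ≥ 1, n = 4k+3, and let T be the tournament with vertex set A ∪ B ∪ {v}, |A| = |B| = 2k+1, where T[A], T[B] are k-regular tournaments, all edges go from A to B, from B to v, and from v to A. Then δ⁰(T) = k+1 ≥ ⌊(n+2)/4⌋, and for every S ⊆ V(T) with S ∩ A ≠ ∅ and S ∩ B ≠ ∅ and v ∉ S, the subtournament T[S] is not strongly connected. -/
open Finset

theorem stmt_12 {V : Type*} [Fintype V] [DecidableEq V] (k : ℕ) (hk : 1 ≤ k)
    (hcard : Fintype.card V = 4*k + 3)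
    (T : V → V → Prop) [DecidableRel T] (hT : IsTournament T)
    (A B : Finset V) (v₀ : V) (hdisj : Disjoint A B) (hv₀A : v₀ ∉ A) (hv₀B : v₀ ∉ B)
    (hunion : A ∪ B ∪ {v₀} = Finset.univ)
    (hA : A.card = 2*k + 1) (hB : B.card = 2*k + 1)
    (hregA : ∀ v ∈ A, (A.filter (fun u => T u v)).card = k ∧ (A.filter (fun u => T v u)).card = k)
    (hregB : ∀ v ∈ B, (B.filter (fun u => T u v)).card = k ∧ (B.filter (fun u => T v u)).card = k)
    (hAB : ∀ a ∈ A, ∀ b ∈ B, T a b)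
    (hBv : ∀ b ∈ B, T b v₀) (hvA : ∀ a ∈ A, T v₀ a) :
    minSemidegree T = k + 1 ∧ (Fintype.card V + 2) / 4 ≤ k + 1 ∧
    ∀ S : Finset V, (S ∩ A).Nonempty → (S ∩ B).Nonempty → v₀ ∉ S →
      ¬ (∀ u ∈ S, ∀ v ∈ S, Relation.ReflTransGen (fun x y => x ∈ S ∧ y ∈ S ∧ T x y) u v) := by
  obtain ⟨hirr, hasym⟩ := hT
  have hABne : ∀ a ∈ A, ∀ b ∈ B, a ≠ b := fun a ha b hb h =>
    Finset.disjoint_left.mp hdisj ha (h ▸ hb)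
  have hnotBA : ∀ b ∈ B, ∀ a ∈ A, ¬ T b a := fun b hb a ha =>
    (hasym a b (hABne a ha b hb)).mp (hAB a ha b hb)
  have hnotvB : ∀ b ∈ B, ¬ T v₀ b := fun b hb =>
    (hasym b v₀ (fun h => hv₀B (h ▸ hb))).mp (hBv b hb)
  have hnotAv : ∀ a ∈ A, ¬ T a v₀ := fun a ha hTa =>
    (hasym a v₀ (fun h => hv₀A (h ▸ ha))).mp hTa (hvA a ha)
  have hdAB : Disjoint A B := hdisj
  have hdUv : Disjoint (A ∪ B) ({v₀} : Finset V) := by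
    simp [Finset.disjoint_singleton_right, hv₀A, hv₀B]
  have cardsplit : ∀ (p : V → Prop) (_ : DecidablePred p),
      (Finset.univ.filter p).card
        = (A.filter p).card + (B.filter p).card + (({v₀} : Finset V).filter p).card := by
    intro p hp
    have d2 : Disjoint (A.filter p ∪ B.filter p) (({v₀} : Finset V).filter p) := by
      rw [← filter_union]; exact disjoint_filter_filter hdUv
    rw [← hunion, filter_union, filter_union,
      card_union_of_disjoint d2,
      card_union_of_disjoint (disjoint_filter_filter hdAB)]
  -- degree computations
  have hinA : ∀ a ∈ A, inDeg T a = k + 1 := by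
    intro a ha
    rw [inDeg, cardsplit _ inferInstance]
    have h1 : (B.filter (fun u => T u a)) = ∅ := by
      rw [filter_eq_empty_iff]; exact fun b hb => hnotBA b hb a ha
    have h2 : ({v₀} : Finset V).filter (fun u => T u a) = {v₀} := by
      rw [Finset.filter_singleton, if_pos (hvA a ha)]
    rw [(hregA a ha).1, h1, h2]; simp
  have houtA : ∀ a ∈ A, outDeg T a = 3 * k + 1 := by
    intro a ha
    rw [outDeg, cardsplit _ inferInstance]
    have h1 : (B.filter (fun u => T a u)) = B := by
      rw [filter_eq_self]; exact fun b hb => hAB a ha b hb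
    have h2 : ({v₀} : Finset V).filter (fun u => T a u) = ∅ := by
      rw [Finset.filter_singleton, if_neg (hnotAv a ha)]
    rw [(hregA a ha).2, h1, h2, hB]; simp; ring
  have hinB : ∀ b ∈ B, inDeg T b = 3 * k + 1 := by
    intro b hb
    rw [inDeg, cardsplit _ inferInstance]
    have h1 : (A.filter (fun u => T u b)) = A := by
      rw [filter_eq_self]; exact fun a ha => hAB a ha b hb
    have h2 : ({v₀} : Finset V).filter (fun u => T u b) = ∅ := by
      rw [Finset.filter_singleton, if_neg (hnotvB b hb)]
    rw [(hregB b hb).1, h1, h2, hA]; simp; ring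
  have houtB : ∀ b ∈ B, outDeg T b = k + 1 := by
    intro b hb
    rw [outDeg, cardsplit _ inferInstance]
    have h1 : (A.filter (fun u => T b u)) = ∅ := by
      rw [filter_eq_empty_iff]; exact fun a ha => hnotBA b hb a ha
    have h2 : ({v₀} : Finset V).filter (fun u => T b u) = {v₀} := by
      rw [Finset.filter_singleton, if_pos (hBv b hb)]
    rw [(hregB b hb).2, h1, h2]; simp
  have hinv : inDeg T v₀ = 2 * k + 1 := by
    rw [inDeg, cardsplit _ inferInstance]
    have h1 : (A.filter (fun u => T u v₀)) = ∅ := by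
      rw [filter_eq_empty_iff]; exact fun a ha => hnotAv a ha
    have h2 : (B.filter (fun u => T u v₀)) = B := by
      rw [filter_eq_self]; exact fun b hb => hBv b hb
    have h3 : ({v₀} : Finset V).filter (fun u => T u v₀) = ∅ := by
      rw [Finset.filter_singleton, if_neg (hirr v₀)]
    rw [h1, h2, h3, hB]; simp
  have houtv : outDeg T v₀ = 2 * k + 1 := by
    rw [outDeg, cardsplit _ inferInstance]
    have h1 : (A.filter (fun u => T v₀ u)) = A := by
      rw [filter_eq_self]; exact fun a ha => hvA a ha
    have h2 : (B.filter (fun u => T v₀ u)) = ∅ := by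
      rw [filter_eq_empty_iff]; exact fun b hb => hnotvB b hb
    have h3 : ({v₀} : Finset V).filter (fun u => T v₀ u) = ∅ := by
      rw [Finset.filter_singleton, if_neg (hirr v₀)]
    rw [h1, h2, h3, hA]; simp
  have hAne : A.Nonempty := card_pos.mp (by omega)
  obtain ⟨a₀, ha₀⟩ := hAne
  have huniv_ne : (Finset.univ : Finset V).Nonempty := ⟨a₀, mem_univ a₀⟩
  refine ⟨?_, by omega, ?_⟩
  · rw [minSemidegree, dif_pos huniv_ne]
    apply le_antisymm
    · refine le_trans (inf'_le _ (mem_univ a₀)) ?_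
      rw [hinA a₀ ha₀, houtA a₀ ha₀]
      omega
    · apply le_inf'
      intro w _
      have hw : w ∈ A ∪ B ∪ {v₀} := hunion ▸ mem_univ w
      simp only [mem_union, mem_singleton] at hw
      rcases hw with (hw | hw) | hw
      · rw [hinA w hw, houtA w hw]; omega
      · rw [hinB w hw, houtB w hw]; omega
      · subst hw; rw [hinv, houtv]; omega
  · intro S hSA hSB hv₀S hconn
    obtain ⟨a, haS⟩ := hSA
    obtain ⟨b, hbS⟩ := hSB
    rw [mem_inter] at haS hbS
    have key : ∀ x, Relation.ReflTransGen (fun x y => x ∈ S ∧ y ∈ S ∧ T x y) b x → x ∈ B := by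
      intro x hx
      induction hx with
      | refl => exact hbS.2
      | @tail y z _ h2 ih =>
        obtain ⟨hcS, hxS, hTxy⟩ := h2
        have hxU : z ∈ A ∪ B ∪ {v₀} := hunion ▸ mem_univ z
        simp only [mem_union, mem_singleton] at hxU
        rcases hxU with (hxA | hxB) | hxv
        · exact absurd hTxy (hnotBA _ ih _ hxA)
        · exact hxB
        · exact absurd (hxv ▸ hxS) hv₀S
    exact Finset.disjoint_left.mp hdisj haS.2 (key a (hconn b hbS.1 a haS.1))
end
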